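/- Let d ≥ 2, let ρ_AB be a bipartite quantum state on C^d⊗C^2 with reduced state ρ_A = Tr_B[ρ_AB], let {P_j}_{j=1}^{d²} be a general SIC-POVM on C^d with efficiency parameter a1, let {Q_j}_{j=1}^{4} be a general SIC-POVM on C^2 with efficiency parameter a2, and let μ ∈ (0, 1/√3]. Assume that every separable state σ on C^d⊗C^2 satisfies J(σ) ≤ √((a1 d²+1)/(d(d+1)))·√((4a2+1)/6 + (d²−4)/16). If J(ρ_AB) > √((a1 d²+1)/(d(d+1)))·√((4a2+1)/6 + (d²−4)/16)/μ − (1−μ)/(4μ), then the state τ_AB = μ ρ_AB + (1−μ) ρ_A ⊗ (I_2/2) is entangled (not separable). -/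

import Mathlib

open Matrix BigOperators
open scoped Kronecker ComplexOrder

noncomputable section

/-- A quantum state (density matrix): positive semidefinite with trace one. -/
def IsState {ι : Type*} [Fintype ι] [DecidableEq ι] (ρ : Matrix ι ι ℂ) : Prop :=
  ρ.PosSemidef ∧ ρ.trace = 1

/-- A POVM: a finite family of positive semidefinite matrices summing to the identity. -/
def IsPOVM {ι : Type*} [Fintype ι] [DecidableEq ι] {m : ℕ}
    (E : Fin m → Matrix ι ι ℂ) : Prop :=
  (∀ j, (E j).PosSemidef) ∧ (∑ j, E j = 1)

/-- Partial trace over the second tensor factor. -/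
def ptraceB {dA dB : ℕ} (ρ : Matrix (Fin dA × Fin dB) (Fin dA × Fin dB) ℂ) :
    Matrix (Fin dA) (Fin dA) ℂ :=
  Matrix.of fun i j => ∑ k : Fin dB, ρ (i, k) (j, k)

/-- Partial trace over the first tensor factor. -/
def ptraceA {dA dB : ℕ} (ρ : Matrix (Fin dA × Fin dB) (Fin dA × Fin dB) ℂ) :
    Matrix (Fin dB) (Fin dB) ℂ :=
  Matrix.of fun i j => ∑ k : Fin dA, ρ (k, i) (k, j)

/-- Local-hidden-state model for steering from Bob (second factor) to Alice (first factor). -/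
def UnsteerableBtoA {dA dB : ℕ} (ρ : Matrix (Fin dA × Fin dB) (Fin dA × Fin dB) ℂ) : Prop :=
  ∃ (L : ℕ) (p : Fin L → ℝ) (σ : Fin L → Matrix (Fin dA) (Fin dA) ℂ),
    (∀ l, 0 ≤ p l) ∧ (∑ l, p l = 1) ∧ (∀ l, IsState (σ l)) ∧
    ∀ (m : ℕ) (E : Fin m → Matrix (Fin dB) (Fin dB) ℂ), IsPOVM E →
      ∃ q : Fin m → Fin L → ℝ,
        (∀ j l, 0 ≤ q j l) ∧ (∀ l, ∑ j, q j l = 1) ∧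
        ∀ j, ptraceB ((1 ⊗ₖ E j) * ρ) = ∑ l, ((p l * q j l : ℝ) : ℂ) • σ l

/-- Local-hidden-state model for steering from Alice (first factor) to Bob (second factor). -/
def UnsteerableAtoB {dA dB : ℕ} (ρ : Matrix (Fin dA × Fin dB) (Fin dA × Fin dB) ℂ) : Prop :=
  ∃ (L : ℕ) (p : Fin L → ℝ) (σ : Fin L → Matrix (Fin dB) (Fin dB) ℂ),
    (∀ l, 0 ≤ p l) ∧ (∑ l, p l = 1) ∧ (∀ l, IsState (σ l)) ∧
    ∀ (m : ℕ) (E : Fin m → Matrix (Fin dA) (Fin dA) ℂ), IsPOVM E →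
      ∃ q : Fin m → Fin L → ℝ,
        (∀ j l, 0 ≤ q j l) ∧ (∀ l, ∑ j, q j l = 1) ∧
        ∀ j, ptraceA ((E j ⊗ₖ 1) * ρ) = ∑ l, ((p l * q j l : ℝ) : ℂ) • σ l

/-- Separable bipartite state: a finite convex combination of product density matrices. -/
def SeparableState {dA dB : ℕ} (τ : Matrix (Fin dA × Fin dB) (Fin dA × Fin dB) ℂ) : Prop :=
  ∃ (m : ℕ) (q : Fin m → ℝ) (α : Fin m → Matrix (Fin dA) (Fin dA) ℂ)
      (β : Fin m → Matrix (Fin dB) (Fin dB) ℂ),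
    (∀ k, 0 ≤ q k) ∧ (∑ k, q k = 1) ∧ (∀ k, IsState (α k)) ∧ (∀ k, IsState (β k)) ∧
    τ = ∑ k, ((q k : ℝ) : ℂ) • (α k ⊗ₖ β k)

/-- A complete set of `d+1` mutually unbiased measurements on ℂ^d with efficiency
parameter `κ` (`1/d < κ ≤ 1`): every pair of the `d+1` POVMs is mutually unbiased. -/
def IsCompleteMUM (d : ℕ) (κ : ℝ) (P : Fin (d+1) → Fin d → Matrix (Fin d) (Fin d) ℂ) : Prop :=
  ((d : ℝ)⁻¹ < κ ∧ κ ≤ 1) ∧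
  (∀ b, IsPOVM (P b)) ∧
  (∀ b n, (P b n).trace = 1) ∧
  (∀ b b' n n', b ≠ b' → (P b n * P b' n').trace = ((d : ℂ))⁻¹) ∧
  (∀ b n n', (P b n * P b n').trace =
    if n = n' then ((κ : ℝ) : ℂ) else (((1 - κ) / ((d : ℝ) - 1) : ℝ) : ℂ))

/-- A general symmetric informationally complete POVM on ℂ^d with efficiency parameter `a`. -/
def IsGSIC (d : ℕ) (a : ℝ) (P : Fin (d^2) → Matrix (Fin d) (Fin d) ℂ) : Prop :=
  (((d : ℝ)^3)⁻¹ < a ∧ a ≤ ((d : ℝ)^2)⁻¹) ∧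
  (∀ j, (P j).PosSemidef) ∧ (∑ j, P j = 1) ∧
  (∀ j, (P j * P j).trace = ((a : ℝ) : ℂ)) ∧
  (∀ j k, j ≠ k → (P j * P k).trace =
    (((1 - (d : ℝ) * a) / ((d : ℝ) * ((d : ℝ)^2 - 1)) : ℝ) : ℂ))

/-- The operators `R_n^(b)` built from a complete set of qubit MUMs: `R_n^(b) = Q_n^(b)`
for `b ≤ 3`, `n ≤ 2`, and `R_n^(b) = I/2` otherwise. -/
def Rmum (d : ℕ) (Q : Fin 3 → Fin 2 → Matrix (Fin 2) (Fin 2) ℂ)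
    (b : Fin (d+1)) (n : Fin d) : Matrix (Fin 2) (Fin 2) ℂ :=
  if hb : (b : ℕ) < 3 then
    if hn : (n : ℕ) < 2 then Q ⟨(b : ℕ), hb⟩ ⟨(n : ℕ), hn⟩ else (2 : ℂ)⁻¹ • 1
  else (2 : ℂ)⁻¹ • 1

/-- The operators `R_j` built from a qubit general SIC-POVM: `R_j = Q_j` for `j ≤ 4`
and `R_j = I/4` otherwise. -/
def Rgsic (d : ℕ) (Q : Fin (2^2) → Matrix (Fin 2) (Fin 2) ℂ)
    (j : Fin (d^2)) : Matrix (Fin 2) (Fin 2) ℂ :=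
  if hj : (j : ℕ) < 4 then Q ⟨(j : ℕ), lt_of_lt_of_eq hj (by norm_num)⟩
  else (4 : ℂ)⁻¹ • 1

/-- The Pauli matrices σ₁, σ₂, σ₃. -/
def pauli : Fin 3 → Matrix (Fin 2) (Fin 2) ℂ
  | 0 => !![0, 1; 1, 0]
  | 1 => !![0, -Complex.I; Complex.I, 0]
  | 2 => !![1, 0; 0, -1]

/-- `H(ρ) = Tr[(σ₁⊗σ₁ − σ₂⊗σ₂ + σ₃⊗σ₃)ρ]` for a two-qubit state. -/
def Hcorr (ρ : Matrix (Fin 2 × Fin 2) (Fin 2 × Fin 2) ℂ) : ℝ :=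
  (((pauli 0 ⊗ₖ pauli 0 - pauli 1 ⊗ₖ pauli 1 + pauli 2 ⊗ₖ pauli 2) * ρ).trace).re

/-!
The witness `J` is real-linear in the state, and on a product `ρ_A ⊗ I/2` it only sees
`∑ⱼ Pⱼ = I` and the traces `Tr Rⱼ = 1/2` (the qubit SIC elements have trace `1/2`), so
`J(ρ_A ⊗ I/2) = 1/4`. Hence `J(τ) = μ J(ρ) + (1 - μ)/4`, and the hypothesis on `J(ρ)` says
exactly that this exceeds the bound obeyed by every separable state.
-/

/-- The paper's witness `J(σ) = ∑ⱼ Tr[(Pⱼ ⊗ Rⱼ) σ]`. -/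
def witnessValue {dA dB : ℕ} {ι : Type*} [Fintype ι] (P : ι → Matrix (Fin dA) (Fin dA) ℂ)
    (R : ι → Matrix (Fin dB) (Fin dB) ℂ) (σ : Matrix (Fin dA × Fin dB) (Fin dA × Fin dB) ℂ) :
    ℝ :=
  ∑ j, (((P j ⊗ₖ R j) * σ).trace).re

section witnessValue

variable {dA dB : ℕ} {ι : Type*} [Fintype ι] (P : ι → Matrix (Fin dA) (Fin dA) ℂ)
  (R : ι → Matrix (Fin dB) (Fin dB) ℂ)

theorem witnessValue_add (σ σ' : Matrix (Fin dA × Fin dB) (Fin dA × Fin dB) ℂ) :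
    witnessValue P R (σ + σ') = witnessValue P R σ + witnessValue P R σ' := by
  simp only [witnessValue, Matrix.mul_add, Matrix.trace_add, Complex.add_re,
    Finset.sum_add_distrib]

theorem witnessValue_real_smul (t : ℝ) (σ : Matrix (Fin dA × Fin dB) (Fin dA × Fin dB) ℂ) :
    witnessValue P R ((t : ℂ) • σ) = t * witnessValue P R σ := by
  simp only [witnessValue, Matrix.mul_smul, Matrix.trace_smul, smul_eq_mul,
    Complex.re_ofReal_mul, Finset.mul_sum]

theorem witnessValue_kronecker {c : ℂ} (hP : ∑ j, P j = 1)
    (hR : ∀ j, (R j).trace = c) (A : Matrix (Fin dA) (Fin dA) ℂ) (t : ℂ) :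
    witnessValue P R (A ⊗ₖ (t • 1)) = (t * c * A.trace).re := by
  have hterm : ∀ j, ((P j ⊗ₖ R j) * (A ⊗ₖ (t • 1))).trace = t * c * (P j * A).trace := by
    intro j
    rw [← Matrix.mul_kronecker_mul, Matrix.trace_kronecker, Matrix.mul_smul, Matrix.mul_one,
      Matrix.trace_smul, hR, smul_eq_mul]
    ring
  simp only [witnessValue, hterm, ← Complex.re_sum, ← Finset.mul_sum, ← Matrix.trace_sum,
    ← Finset.sum_mul, hP, Matrix.one_mul]

end witnessValue

theorem trace_ptraceB {dA dB : ℕ} (ρ : Matrix (Fin dA × Fin dB) (Fin dA × Fin dB) ℂ) :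
    (ptraceB ρ).trace = ρ.trace := by
  simp [ptraceB, Matrix.trace, Fintype.sum_prod_type]

/-- `Tr Pⱼ = Tr (Pⱼ ∑ₖ Pₖ)`; the degenerate case `d = 1` is ruled out by the range of `a`. -/
theorem IsGSIC.trace_eq {d : ℕ} {a : ℝ} {P : Fin (d ^ 2) → Matrix (Fin d) (Fin d) ℂ}
    (hP : IsGSIC d a P) (j : Fin (d ^ 2)) : (P j).trace = (d : ℂ)⁻¹ := by
  obtain ⟨⟨ha_lo, ha_hi⟩, -, hsum, hdiag, hoff⟩ := hP
  have hd : 2 ≤ d := by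
    by_contra! h
    interval_cases d
    · exact j.elim0
    · norm_num at ha_lo ha_hi
      linarith
  have hexpand : (P j).trace =
      ((a + ((d : ℝ) ^ 2 - 1) * ((1 - d * a) / (d * ((d : ℝ) ^ 2 - 1))) : ℝ) : ℂ) := by
    rw [← Matrix.mul_one (P j), ← hsum, Matrix.mul_sum, Matrix.trace_sum,
      ← Finset.add_sum_erase _ _ (Finset.mem_univ j), hdiag,
      Finset.sum_congr rfl fun k hk => hoff j k (Finset.ne_of_mem_erase hk).symm,
      Finset.sum_const, Finset.card_erase_of_mem (Finset.mem_univ j), Finset.card_univ,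
      Fintype.card_fin, nsmul_eq_mul, Nat.cast_sub (Nat.one_le_pow _ _ (by omega))]
    push_cast
    ring
  have hd' : (2 : ℝ) ≤ d := by exact_mod_cast hd
  have hsimplify : a + ((d : ℝ) ^ 2 - 1) * ((1 - d * a) / (d * ((d : ℝ) ^ 2 - 1))) =
      (d : ℝ)⁻¹ := by
    have : (d : ℝ) ^ 2 - 1 ≠ 0 := by nlinarith
    field_simp
    ring
  rw [hexpand, hsimplify]
  push_cast
  rfl

theorem trace_Rgsic {d : ℕ} {a : ℝ} {Q : Fin (2 ^ 2) → Matrix (Fin 2) (Fin 2) ℂ}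
    (hQ : IsGSIC 2 a Q) (j : Fin (d ^ 2)) : (Rgsic d Q j).trace = (2 : ℂ)⁻¹ := by
  unfold Rgsic
  split
  · simpa using hQ.trace_eq _
  · norm_num [Matrix.trace_smul]

theorem witnessValue_ptraceB_kronecker_half {dA dB : ℕ} {ι : Type*} [Fintype ι]
    {P : ι → Matrix (Fin dA) (Fin dA) ℂ} {R : ι → Matrix (Fin dB) (Fin dB) ℂ}
    (hP : ∑ j, P j = 1) (hR : ∀ j, (R j).trace = (2 : ℂ)⁻¹)
    {ρ : Matrix (Fin dA × Fin dB) (Fin dA × Fin dB) ℂ} (hρ : IsState ρ) :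
    witnessValue P R (ptraceB ρ ⊗ₖ ((2 : ℂ)⁻¹ • 1)) = 1 / 4 := by
  rw [witnessValue_kronecker P R hP hR, trace_ptraceB, hρ.2]
  norm_num

theorem entangled_mixture_GSIC_qudit_qubit_general (d : ℕ) (a1 a2 μ : ℝ)
    (hμ : μ ∈ Set.Ioc (0 : ℝ) (1 / Real.sqrt 3))
    (ρAB : Matrix (Fin d × Fin 2) (Fin d × Fin 2) ℂ) (hρ : IsState ρAB)
    (P : Fin (d^2) → Matrix (Fin d) (Fin d) ℂ)
    (Q : Fin (2^2) → Matrix (Fin 2) (Fin 2) ℂ)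
    (hP : IsGSIC d a1 P) (hQ : IsGSIC 2 a2 Q)
    (hsep : ∀ σ : Matrix (Fin d × Fin 2) (Fin d × Fin 2) ℂ, SeparableState σ →
      ∑ j, (((P j ⊗ₖ Rgsic d Q j) * σ).trace).re ≤
        Real.sqrt ((a1 * (d : ℝ)^2 + 1) / ((d : ℝ) * ((d : ℝ) + 1))) *
          Real.sqrt ((4 * a2 + 1) / 6 + ((d : ℝ)^2 - 4) / 16))
    (hJ : ∑ j, (((P j ⊗ₖ Rgsic d Q j) * ρAB).trace).re >
      Real.sqrt ((a1 * (d : ℝ)^2 + 1) / ((d : ℝ) * ((d : ℝ) + 1))) *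
        Real.sqrt ((4 * a2 + 1) / 6 + ((d : ℝ)^2 - 4) / 16) / μ - (1 - μ) / (4 * μ)) :
    ¬ SeparableState ((μ : ℂ) • ρAB + ((1 - μ : ℝ) : ℂ) • (ptraceB ρAB ⊗ₖ ((2 : ℂ)⁻¹ • 1))) := by
  intro hτ
  have hτJ := hsep _ hτ
  change witnessValue P (Rgsic d Q) _ ≤ _ at hτJ
  change witnessValue P (Rgsic d Q) ρAB > _ at hJ
  rw [witnessValue_add, witnessValue_real_smul, witnessValue_real_smul,
    witnessValue_ptraceB_kronecker_half hP.2.2.1 (trace_Rgsic hQ) hρ] at hτJ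
  rw [gt_iff_lt, sub_lt_iff_lt_add, div_lt_iff₀ hμ.1, add_mul,
    show (1 - μ) / (4 * μ) * μ = (1 - μ) / 4 by field_simp [hμ.1.ne']] at hJ
  linarith

/-- If the general-SIC separability bound holds and `J(ρ)` exceeds the steering threshold,
then `τ = μ ρ + (1−μ) ρ_A ⊗ I/2` is entangled (qudit-qubit case). -/
theorem entangled_mixture_GSIC_qudit_qubit (d : ℕ) (hd : 2 ≤ d) (a1 a2 μ : ℝ)
    (hμ : μ ∈ Set.Ioc (0 : ℝ) (1 / Real.sqrt 3))
    (ρAB : Matrix (Fin d × Fin 2) (Fin d × Fin 2) ℂ) (hρ : IsState ρAB)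
    (P : Fin (d^2) → Matrix (Fin d) (Fin d) ℂ)
    (Q : Fin (2^2) → Matrix (Fin 2) (Fin 2) ℂ)
    (hP : IsGSIC d a1 P) (hQ : IsGSIC 2 a2 Q)
    (hsep : ∀ σ : Matrix (Fin d × Fin 2) (Fin d × Fin 2) ℂ, SeparableState σ →
      ∑ j, (((P j ⊗ₖ Rgsic d Q j) * σ).trace).re ≤
        Real.sqrt ((a1 * (d : ℝ)^2 + 1) / ((d : ℝ) * ((d : ℝ) + 1))) *
          Real.sqrt ((4 * a2 + 1) / 6 + ((d : ℝ)^2 - 4) / 16))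
    (hJ : ∑ j, (((P j ⊗ₖ Rgsic d Q j) * ρAB).trace).re >
      Real.sqrt ((a1 * (d : ℝ)^2 + 1) / ((d : ℝ) * ((d : ℝ) + 1))) *
        Real.sqrt ((4 * a2 + 1) / 6 + ((d : ℝ)^2 - 4) / 16) / μ - (1 - μ) / (4 * μ)) :
    ¬ SeparableState ((μ : ℂ) • ρAB + ((1 - μ : ℝ) : ℂ) • (ptraceB ρAB ⊗ₖ ((2 : ℂ)⁻¹ • 1))) :=
  entangled_mixture_GSIC_qudit_qubit_general d a1 a2 μ hμ ρAB hρ P Q hP hQ hsep hJ
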